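/- arXiv:1808.05129 — 2 statements merged into one kernel-verified Lean document; each statement's English description precedes it below -/
import Mathlib

section
/- Derivative estimate for the distance to a closed set along a curve (key step in the proof of Theorem 4.10): Let S ⊆ ℝⁿ be nonempty and closed, let z be an ℝⁿ-valued function defined on an interval I ⊆ ℝ, and let t₀ ∈ I be a point at which z is differentiable and at which the function t ↦ dist(z(t),S) is differentiable. Let χ ∈ S be a closest point to z(t₀) in S, i.e., |z(t₀) − χ| = dist(z(t₀),S). Then (d/dt)|_{t=t₀} dist(z(t),S) ≤ |z'(t₀) − ω| for every ω ∈ T_S(χ); consequently (d/dt)|_{t=t₀} dist(z(t),S) ≤ dist(z'(t₀), T_S(χ)). -/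
open Set Filter MeasureTheory Metric Topology

noncomputable section

namespace Hybrid

/-- The state space `ℝⁿ`. -/
abbrev E (n : ℕ) : Type := EuclideanSpace ℝ (Fin n)

/-! ## Hybrid time domains -/

/-- A compact hybrid time domain: `∪_{j=0}^{J-1} [t_j, t_{j+1}] × {j}` for a finite
nondecreasing sequence of times `0 = t_0 ≤ t_1 ≤ … ≤ t_J`. -/
def IsCompactHybridTimeDomain (S : Set (ℝ × ℕ)) : Prop :=
  ∃ (J : ℕ) (t : ℕ → ℝ), t 0 = 0 ∧ (∀ j, j < J → t j ≤ t (j + 1)) ∧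
    S = ⋃ j ∈ Finset.range J, Set.Icc (t j) (t (j + 1)) ×ˢ ({j} : Set ℕ)

/-- A hybrid time domain: each truncation `S ∩ ([0,T] × {0,…,J})`, `(T,J) ∈ S`, is a
compact hybrid time domain. -/
def IsHybridTimeDomain (S : Set (ℝ × ℕ)) : Prop :=
  ∀ p ∈ S, IsCompactHybridTimeDomain (S ∩ (Set.Icc 0 p.1 ×ˢ Set.Iic p.2))

/-- The slice `I^j = {t : (t,j) ∈ dom}` of a hybrid time domain. -/
def Ij (dom : Set (ℝ × ℕ)) (j : ℕ) : Set ℝ := {t | (t, j) ∈ dom}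

/-- `T`, the supremum of the ordinary-time component of a hybrid time domain. -/
def supT (dom : Set (ℝ × ℕ)) : ℝ := sSup (Prod.fst '' dom)

/-- `J`, the supremum of the jump component of a hybrid time domain. -/
def supJ (dom : Set (ℝ × ℕ)) : ℕ := sSup (Prod.snd '' dom)

/-- A hybrid time domain is unbounded (the corresponding solution is complete). -/
def IsCompleteDom (dom : Set (ℝ × ℕ)) : Prop := ∀ M : ℝ, ∃ p ∈ dom, M < p.1 + (p.2 : ℝ)

/-- The domain contains at least two points (the corresponding solution is nontrivial). -/
def NontrivialDom (dom : Set (ℝ × ℕ)) : Prop := ∃ p ∈ dom, ∃ q ∈ dom, p ≠ q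

/-! ## Absolute continuity -/

/-- Absolute continuity of `f` on a set `s ⊆ ℝ`, via the classical ε-δ definition over
finite families of nonoverlapping intervals with endpoints in `s`. -/
def AbsolutelyContinuousOn {X : Type*} [NormedAddCommGroup X] (f : ℝ → X) (s : Set ℝ) :
    Prop :=
  ∀ ε > (0:ℝ), ∃ δ > (0:ℝ), ∀ (m : ℕ) (a b : ℕ → ℝ),
    (∀ i < m, a i ∈ s ∧ b i ∈ s ∧ a i ≤ b i) →
    (∀ i < m, ∀ j < m, i ≠ j → Disjoint (Set.Ioo (a i) (b i)) (Set.Ioo (a j) (b j))) →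
    ∑ i ∈ Finset.range m, (b i - a i) < δ →
    ∑ i ∈ Finset.range m, ‖f (b i) - f (a i)‖ < ε

/-- Local absolute continuity on `s`: absolute continuity on `s ∩ [a,b]` for every compact
interval `[a,b]`. -/
def LocAbsolutelyContinuousOn {X : Type*} [NormedAddCommGroup X] (f : ℝ → X) (s : Set ℝ) :
    Prop :=
  ∀ a b : ℝ, AbsolutelyContinuousOn f (s ∩ Set.Icc a b)

/-! ## Hybrid arcs and hybrid disturbances -/

/-- A hybrid arc: a function on a hybrid time domain that is locally absolutely continuous
in `t` on each slice `I^j`. -/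
def IsHybridArc {n : ℕ} (dom : Set (ℝ × ℕ)) (φ : ℝ → ℕ → E n) : Prop :=
  IsHybridTimeDomain dom ∧ ∀ j, LocAbsolutelyContinuousOn (fun t => φ t j) (Ij dom j)

/-- A hybrid disturbance with values in `W`: Lebesgue measurable and locally essentially
bounded in `t` on each slice `I^j`. -/
def IsHybridDisturbance {d : ℕ} (W : Set (E d)) (dom : Set (ℝ × ℕ)) (w : ℝ → ℕ → E d) :
    Prop :=
  IsHybridTimeDomain dom ∧ (∀ p ∈ dom, w p.1 p.2 ∈ W) ∧
    ∀ j, AEMeasurable (fun t => w t j) (volume.restrict (Ij dom j)) ∧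
      ∀ a b : ℝ, ∃ M : ℝ,
        ∀ᵐ t ∂(volume.restrict (Ij dom j ∩ Set.Icc a b)), ‖w t j‖ ≤ M

/-- `rge φ ⊆ K`. -/
def RangeIn {n : ℕ} (dom : Set (ℝ × ℕ)) (φ : ℝ → ℕ → E n) (K : Set (E n)) : Prop :=
  ∀ p ∈ dom, φ p.1 p.2 ∈ K

/-! ## Tangent cones -/

/-- The (Bouligand) tangent cone to `S` at `x`:
`T_S(x) = {ω : liminf_{τ↘0} dist(x+τω,S)/τ = 0}`. -/
def tangentCone {n : ℕ} (S : Set (E n)) (x : E n) : Set (E n) :=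
  {ω | Filter.liminf (fun τ : ℝ => Metric.infDist (x + τ • ω) S / τ) (𝓝[>] (0:ℝ)) = 0}

/-- The Clarke tangent cone to `S` at `x`. -/
def clarkeTangentCone {n : ℕ} (S : Set (E n)) (x : E n) : Set (E n) :=
  {v | ∀ (xs : ℕ → E n) (τ : ℕ → ℝ), (∀ i, xs i ∈ S) → Tendsto xs atTop (𝓝 x) →
    (∀ i, 0 < τ i) → Tendsto τ atTop (𝓝 (0:ℝ)) →
    ∃ vs : ℕ → E n, Tendsto vs atTop (𝓝 v) ∧ ∀ i, xs i + τ i • vs i ∈ S}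

/-! ## Regularity notions for set-valued maps -/

/-- Outer semicontinuity of a set-valued map relative to a set `A`. -/
def OuterSemicontinuousRel {α β : Type*} [TopologicalSpace α] [TopologicalSpace β]
    (F : α → Set β) (A : Set α) : Prop :=
  ∀ (x : ℕ → α) (y : ℕ → β) (x₀ : α) (y₀ : β), (∀ i, x i ∈ A) → x₀ ∈ A →
    Tendsto x atTop (𝓝 x₀) → (∀ i, y i ∈ F (x i)) → Tendsto y atTop (𝓝 y₀) → y₀ ∈ F x₀

/-- Local boundedness of a set-valued map relative to a set `A`. -/
def LocallyBoundedRel {α β : Type*} [TopologicalSpace α] [Bornology β]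
    (F : α → Set β) (A : Set α) : Prop :=
  ∀ x ∈ A, ∃ U ∈ 𝓝 x, Bornology.IsBounded (⋃ y ∈ U ∩ A, F y)

/-- A set-valued map `F` is locally Lipschitz on `C`:
`F(x₁) ⊆ F(x₂) + λ‖x₁−x₂‖𝔹` locally. -/
def SetValuedLocallyLipschitzOn {n : ℕ} (F : E n → Set (E n)) (C : Set (E n)) : Prop :=
  ∀ x ∈ C, ∃ U ∈ 𝓝 x, ∃ lam : ℝ, 0 ≤ lam ∧
    ∀ x₁ ∈ U ∩ C, ∀ x₂ ∈ U ∩ C, ∀ v ∈ F x₁, ∃ u ∈ F x₂, ‖v - u‖ ≤ lam * ‖x₁ - x₂‖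

/-- Linear growth of a set-valued map on a set `A`. -/
def LinearGrowthOn {n : ℕ} (F : E n → Set (E n)) (A : Set (E n)) : Prop :=
  ∃ c > (0:ℝ), ∀ x ∈ A, ∀ v ∈ F x, ‖v‖ ≤ c * (‖x‖ + 1)

/-! ## Nominal hybrid systems H = (C,F,D,G) -/

/-- A solution `φ` (with domain `dom`) to the hybrid system `H = (C,F,D,G)`. -/
def IsSolution {n : ℕ} (C : Set (E n)) (F : E n → Set (E n)) (D : Set (E n))
    (G : E n → Set (E n)) (dom : Set (ℝ × ℕ)) (φ : ℝ → ℕ → E n) : Prop :=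
  IsHybridArc dom φ ∧ (0, 0) ∈ dom ∧ φ 0 0 ∈ closure C ∪ D ∧
  (∀ j, (interior (Ij dom j)).Nonempty →
    (∀ t ∈ interior (Ij dom j), φ t j ∈ C) ∧
    ∀ᵐ t ∂(volume.restrict (Ij dom j)),
      ∃ v ∈ F (φ t j), HasDerivWithinAt (fun s => φ s j) v (Ij dom j) t) ∧
  (∀ t j, (t, j) ∈ dom → (t, j + 1) ∈ dom → φ t j ∈ D ∧ φ t (j + 1) ∈ G (φ t j))

/-- A maximal solution to `H`: not a truncation of another solution to a proper subset
of that solution's domain. -/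
def IsMaximalSolution {n : ℕ} (C : Set (E n)) (F : E n → Set (E n)) (D : Set (E n))
    (G : E n → Set (E n)) (dom : Set (ℝ × ℕ)) (φ : ℝ → ℕ → E n) : Prop :=
  IsSolution C F D G dom φ ∧
  ∀ dom' φ', IsSolution C F D G dom' φ' → dom ⊆ dom' →
    (∀ p ∈ dom, φ' p.1 p.2 = φ p.1 p.2) → dom' = dom

/-- Weak forward pre-invariance of `K` for `H`. -/
def WeaklyForwardPreInvariant {n : ℕ} (C : Set (E n)) (F : E n → Set (E n)) (D : Set (E n))
    (G : E n → Set (E n)) (K : Set (E n)) : Prop :=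
  ∀ x ∈ K, ∃ dom φ, IsMaximalSolution C F D G dom φ ∧ φ 0 0 = x ∧ RangeIn dom φ K

/-- Weak forward invariance of `K` for `H`. -/
def WeaklyForwardInvariant {n : ℕ} (C : Set (E n)) (F : E n → Set (E n)) (D : Set (E n))
    (G : E n → Set (E n)) (K : Set (E n)) : Prop :=
  ∀ x ∈ K, ∃ dom φ, IsMaximalSolution C F D G dom φ ∧ φ 0 0 = x ∧ IsCompleteDom dom ∧
    RangeIn dom φ K

/-- Forward pre-invariance of `K` for `H`. -/
def ForwardPreInvariant {n : ℕ} (C : Set (E n)) (F : E n → Set (E n)) (D : Set (E n))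
    (G : E n → Set (E n)) (K : Set (E n)) : Prop :=
  ∀ dom φ, IsMaximalSolution C F D G dom φ → φ 0 0 ∈ K → RangeIn dom φ K

/-- Forward invariance of `K` for `H`. -/
def ForwardInvariant {n : ℕ} (C : Set (E n)) (F : E n → Set (E n)) (D : Set (E n))
    (G : E n → Set (E n)) (K : Set (E n)) : Prop :=
  (∀ x ∈ K, ∃ dom φ, IsSolution C F D G dom φ ∧ φ 0 0 = x) ∧
  ∀ dom φ, IsMaximalSolution C F D G dom φ → φ 0 0 ∈ K →
    IsCompleteDom dom ∧ RangeIn dom φ K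

/-- Assumption (data) for the nominal system. -/
def DataAssumption {n : ℕ} (K C D : Set (E n)) (F : E n → Set (E n)) : Prop :=
  K ⊆ closure C ∪ D ∧ IsClosed (K ∩ C) ∧
  OuterSemicontinuousRel F (K ∩ C) ∧ LocallyBoundedRel F (K ∩ C) ∧
  ∀ x ∈ K ∩ C, (F x).Nonempty ∧ Convex ℝ (F x)

/-- The set `L = {x ∈ ∂C : F(x) ∩ T_{cl C}(x) = ∅}`. -/
def Lset {n : ℕ} (C : Set (E n)) (F : E n → Set (E n)) : Set (E n) :=
  {x | x ∈ frontier C ∧ F x ∩ tangentCone (closure C) x = ∅}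

/-- The set `Ĉ = ∂(K ∩ C) \ L`. -/
def Chat {n : ℕ} (K C : Set (E n)) (F : E n → Set (E n)) : Set (E n) :=
  frontier (K ∩ C) \ Lset C F

/-- Non-existence of an absolutely continuous extension of `t ↦ φ(t,J)` to `cl(I^J)`
satisfying the flow conditions (S1). -/
def NoFlowExtension {n : ℕ} (C : Set (E n)) (F : E n → Set (E n)) (dom : Set (ℝ × ℕ))
    (φ : ℝ → ℕ → E n) : Prop :=
  ¬ ∃ z : ℝ → E n,
      AbsolutelyContinuousOn z (closure (Ij dom (supJ dom))) ∧
      (∀ t ∈ Ij dom (supJ dom), z t = φ t (supJ dom)) ∧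
      (∀ t ∈ interior (Ij dom (supJ dom)), z t ∈ C) ∧
      ∀ᵐ t ∂(volume.restrict (Ij dom (supJ dom))),
        ∃ v ∈ F (z t), HasDerivWithinAt z v (closure (Ij dom (supJ dom))) t

/-- `φ` is not complete and ends with flow on a final interval open to the right, with no
absolutely continuous extension satisfying the flow conditions (case b.2). -/
def EndsWithUnextendableFlow {n : ℕ} (C : Set (E n)) (F : E n → Set (E n))
    (dom : Set (ℝ × ℕ)) (φ : ℝ → ℕ → E n) : Prop :=
  ¬ IsCompleteDom dom ∧ (supT dom, supJ dom) ∉ dom ∧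
  (Ij dom (supJ dom)).Nonempty ∧ sSup (Ij dom (supJ dom)) ∉ Ij dom (supJ dom) ∧
  NoFlowExtension C F dom φ

/-- Condition (N⋆), for the set `Kstar`, relative to the set `K`. -/
def NStar {n : ℕ} (C : Set (E n)) (F : E n → Set (E n)) (D : Set (E n))
    (G : E n → Set (E n)) (Kstar K : Set (E n)) : Prop :=
  ¬ ∃ dom φ, IsMaximalSolution C F D G dom φ ∧ φ 0 0 ∈ Kstar ∧ RangeIn dom φ K ∧
    EndsWithUnextendableFlow C F dom φ

/-! ## Hybrid systems with disturbances H_w = (C_w,F_w,D_w,G_w) -/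

/-- Projection of `S ⊆ ℝⁿ × W` onto `ℝⁿ`. -/
def proj {n d : ℕ} (W : Set (E d)) (S : Set (E n × E d)) : Set (E n) :=
  {x | ∃ w ∈ W, (x, w) ∈ S}

/-- `Ψ(x) = {w ∈ W : (x,w) ∈ S}`. -/
def Psi {n d : ℕ} (W : Set (E d)) (S : Set (E n × E d)) (x : E n) : Set (E d) :=
  {w | w ∈ W ∧ (x, w) ∈ S}

/-- A solution pair `(φ,(w_c,w_d))` to the hybrid system with disturbances
`H_w = (C_w,F_w,D_w,G_w)`. -/
def IsSolutionPair {n dc dd : ℕ} (Wc : Set (E dc)) (Wd : Set (E dd))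
    (Cw : Set (E n × E dc)) (Fw : E n × E dc → Set (E n))
    (Dw : Set (E n × E dd)) (Gw : E n × E dd → Set (E n))
    (dom : Set (ℝ × ℕ)) (φ : ℝ → ℕ → E n) (wc : ℝ → ℕ → E dc) (wd : ℝ → ℕ → E dd) :
    Prop :=
  IsHybridArc dom φ ∧ IsHybridDisturbance Wc dom wc ∧ IsHybridDisturbance Wd dom wd ∧
  (0, 0) ∈ dom ∧
  ((φ 0 0, wc 0 0) ∈ closure Cw ∨ (φ 0 0, wd 0 0) ∈ Dw) ∧
  (∀ j, (interior (Ij dom j)).Nonempty →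
    (∀ t ∈ interior (Ij dom j), (φ t j, wc t j) ∈ Cw) ∧
    ∀ᵐ t ∂(volume.restrict (Ij dom j)),
      ∃ v ∈ Fw (φ t j, wc t j), HasDerivWithinAt (fun s => φ s j) v (Ij dom j) t) ∧
  (∀ t j, (t, j) ∈ dom → (t, j + 1) ∈ dom →
    (φ t j, wd t j) ∈ Dw ∧ φ t (j + 1) ∈ Gw (φ t j, wd t j))

/-- A maximal solution pair to `H_w`. -/
def IsMaximalSolutionPair {n dc dd : ℕ} (Wc : Set (E dc)) (Wd : Set (E dd))
    (Cw : Set (E n × E dc)) (Fw : E n × E dc → Set (E n))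
    (Dw : Set (E n × E dd)) (Gw : E n × E dd → Set (E n))
    (dom : Set (ℝ × ℕ)) (φ : ℝ → ℕ → E n) (wc : ℝ → ℕ → E dc) (wd : ℝ → ℕ → E dd) :
    Prop :=
  IsSolutionPair Wc Wd Cw Fw Dw Gw dom φ wc wd ∧
  ∀ dom' φ' wc' wd', IsSolutionPair Wc Wd Cw Fw Dw Gw dom' φ' wc' wd' → dom ⊆ dom' →
    (∀ p ∈ dom, φ' p.1 p.2 = φ p.1 p.2 ∧ wc' p.1 p.2 = wc p.1 p.2 ∧
      wd' p.1 p.2 = wd p.1 p.2) →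
    dom' = dom

/-- Robust weak forward pre-invariance of `K` for `H_w`. -/
def RobustlyWeaklyForwardPreInvariant {n dc dd : ℕ} (Wc : Set (E dc)) (Wd : Set (E dd))
    (Cw : Set (E n × E dc)) (Fw : E n × E dc → Set (E n))
    (Dw : Set (E n × E dd)) (Gw : E n × E dd → Set (E n)) (K : Set (E n)) : Prop :=
  ∀ x ∈ K, ∃ dom φ wc wd, IsMaximalSolutionPair Wc Wd Cw Fw Dw Gw dom φ wc wd ∧
    φ 0 0 = x ∧ RangeIn dom φ K

/-- Robust weak forward invariance of `K` for `H_w`. -/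
def RobustlyWeaklyForwardInvariant {n dc dd : ℕ} (Wc : Set (E dc)) (Wd : Set (E dd))
    (Cw : Set (E n × E dc)) (Fw : E n × E dc → Set (E n))
    (Dw : Set (E n × E dd)) (Gw : E n × E dd → Set (E n)) (K : Set (E n)) : Prop :=
  ∀ x ∈ K, ∃ dom φ wc wd, IsMaximalSolutionPair Wc Wd Cw Fw Dw Gw dom φ wc wd ∧
    φ 0 0 = x ∧ IsCompleteDom dom ∧ RangeIn dom φ K

/-- Robust forward pre-invariance of `K` for `H_w`. -/
def RobustlyForwardPreInvariant {n dc dd : ℕ} (Wc : Set (E dc)) (Wd : Set (E dd))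
    (Cw : Set (E n × E dc)) (Fw : E n × E dc → Set (E n))
    (Dw : Set (E n × E dd)) (Gw : E n × E dd → Set (E n)) (K : Set (E n)) : Prop :=
  ∀ dom φ wc wd, IsMaximalSolutionPair Wc Wd Cw Fw Dw Gw dom φ wc wd → φ 0 0 ∈ K →
    RangeIn dom φ K

/-- Robust forward invariance of `K` for `H_w`. -/
def RobustlyForwardInvariant {n dc dd : ℕ} (Wc : Set (E dc)) (Wd : Set (E dd))
    (Cw : Set (E n × E dc)) (Fw : E n × E dc → Set (E n))
    (Dw : Set (E n × E dd)) (Gw : E n × E dd → Set (E n)) (K : Set (E n)) : Prop :=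
  (∀ x ∈ K, ∃ dom φ wc wd, IsSolutionPair Wc Wd Cw Fw Dw Gw dom φ wc wd ∧ φ 0 0 = x) ∧
  ∀ dom φ wc wd, IsMaximalSolutionPair Wc Wd Cw Fw Dw Gw dom φ wc wd → φ 0 0 ∈ K →
    IsCompleteDom dom ∧ RangeIn dom φ K

/-- Condition (VC_w) at `ξ`. -/
def VCw {n dc : ℕ} (Wc : Set (E dc)) (Cw : Set (E n × E dc))
    (Fw : E n × E dc → Set (E n)) (ξ : E n) : Prop :=
  ∃ ε > (0:ℝ), ∃ (z : ℝ → E n) (w : ℝ → E dc),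
    AbsolutelyContinuousOn z (Set.Icc 0 ε) ∧ z 0 = ξ ∧
    AEMeasurable w (volume.restrict (Set.Icc (0:ℝ) ε)) ∧
    (∃ M : ℝ, ∀ᵐ t ∂(volume.restrict (Set.Icc (0:ℝ) ε)), ‖w t‖ ≤ M) ∧
    (∀ t ∈ Set.Icc (0:ℝ) ε, w t ∈ Psi Wc Cw (z t)) ∧
    (∀ t ∈ Set.Ioo (0:ℝ) ε, (z t, w t) ∈ Cw) ∧
    ∀ᵐ t ∂(volume.restrict (Set.Icc (0:ℝ) ε)),
      ∃ v ∈ Fw (z t, w t), HasDerivWithinAt z v (Set.Icc 0 ε) t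

/-- Assumption (wdata). -/
def WDataAssumption {n dc dd : ℕ} (K : Set (E n)) (Wc : Set (E dc)) (Wd : Set (E dd))
    (Cw : Set (E n × E dc)) (Fw : E n × E dc → Set (E n)) (Dw : Set (E n × E dd)) :
    Prop :=
  K ⊆ closure (proj Wc Cw) ∪ proj Wd Dw ∧
  IsClosed (K ∩ proj Wc Cw) ∧
  OuterSemicontinuousRel Fw ((K ×ˢ Wc) ∩ Cw) ∧
  LocallyBoundedRel Fw ((K ×ˢ Wc) ∩ Cw) ∧
  (∀ p ∈ (K ×ˢ Wc) ∩ Cw, (Fw p).Nonempty ∧ Convex ℝ (Fw p)) ∧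
  ∀ x ∈ proj Wc Cw, (0 : E dc) ∈ Psi Wc Cw x

/-- Assumption (wbound). -/
def WBoundAssumption {n dc : ℕ} (K : Set (E n)) (Wc : Set (E dc))
    (Cw : Set (E n × E dc)) : Prop :=
  ∀ ξ ∈ frontier K ∩ proj Wc Cw, ∃ U ∈ 𝓝 ξ,
    ∀ x ∈ U ∩ proj Wc Cw, Psi Wc Cw x ⊆ Psi Wc Cw ξ

/-- `x ↦ F_w(x,w_c)` is locally Lipschitz uniformly in `w_c` on `C_w`. -/
def LocallyLipschitzUniform {n dc : ℕ} (Wc : Set (E dc)) (Cw : Set (E n × E dc))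
    (Fw : E n × E dc → Set (E n)) : Prop :=
  ∀ x ∈ proj Wc Cw, ∃ U ∈ 𝓝 x, ∃ lam : ℝ, 0 ≤ lam ∧
    ∀ x₁ ∈ U ∩ proj Wc Cw, ∀ x₂ ∈ U ∩ proj Wc Cw, ∀ w ∈ Wc,
      (x₁, w) ∈ Cw → (x₂, w) ∈ Cw →
      ∀ v ∈ Fw (x₁, w), ∃ u ∈ Fw (x₂, w), ‖v - u‖ ≤ lam * ‖x₁ - x₂‖

/-- The set `L_w`. -/
def Lw {n dc : ℕ} (Wc : Set (E dc)) (Cw : Set (E n × E dc))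
    (Fw : E n × E dc → Set (E n)) : Set (E n × E dc) :=
  {p | p ∈ Cw ∧ p.1 ∈ frontier (proj Wc Cw) ∧
    Fw p ∩ tangentCone (closure (proj Wc Cw)) p.1 = ∅}

/-- The set `Ĉ_w = ((∂(K ∩ Π_c(C_w)) × W_c) ∩ C_w) \ L_w`. -/
def ChatW {n dc : ℕ} (K : Set (E n)) (Wc : Set (E dc)) (Cw : Set (E n × E dc))
    (Fw : E n × E dc → Set (E n)) : Set (E n × E dc) :=
  ((frontier (K ∩ proj Wc Cw) ×ˢ Wc) ∩ Cw) \ Lw Wc Cw Fw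

/-- Linear growth of `F_w` on a set `A ⊆ ℝⁿ × W_c`. -/
def LinearGrowthOnW {n dc : ℕ} (Fw : E n × E dc → Set (E n)) (A : Set (E n × E dc)) :
    Prop :=
  ∃ c > (0:ℝ), ∀ p ∈ A, ∀ v ∈ Fw p, ‖v‖ ≤ c * (‖p.1‖ + 1)

/-- Non-existence of an absolutely continuous extension of `t ↦ φ(t,J)` to `cl(I^J)`,
with an admissible disturbance, satisfying the flow conditions (Sw1). -/
def NoFlowExtensionW {n dc : ℕ} (Wc : Set (E dc)) (Cw : Set (E n × E dc))
    (Fw : E n × E dc → Set (E n)) (dom : Set (ℝ × ℕ)) (φ : ℝ → ℕ → E n) : Prop :=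
  ¬ ∃ (z : ℝ → E n) (w : ℝ → E dc),
      AbsolutelyContinuousOn z (closure (Ij dom (supJ dom))) ∧
      AEMeasurable w (volume.restrict (closure (Ij dom (supJ dom)))) ∧
      (∃ M : ℝ, ∀ᵐ t ∂(volume.restrict (closure (Ij dom (supJ dom)))), ‖w t‖ ≤ M) ∧
      (∀ t ∈ closure (Ij dom (supJ dom)), w t ∈ Psi Wc Cw (z t)) ∧
      (∀ t ∈ Ij dom (supJ dom), z t = φ t (supJ dom)) ∧
      (∀ t ∈ interior (Ij dom (supJ dom)), (z t, w t) ∈ Cw) ∧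
      ∀ᵐ t ∂(volume.restrict (Ij dom (supJ dom))),
        ∃ v ∈ Fw (z t, w t), HasDerivWithinAt z v (closure (Ij dom (supJ dom))) t

/-- `(φ,w)` is not complete and ends with flow on a final interval open to the right,
with no absolutely continuous extension (case b.2 with disturbances). -/
def EndsWithUnextendableFlowW {n dc : ℕ} (Wc : Set (E dc)) (Cw : Set (E n × E dc))
    (Fw : E n × E dc → Set (E n)) (dom : Set (ℝ × ℕ)) (φ : ℝ → ℕ → E n) : Prop :=
  ¬ IsCompleteDom dom ∧ (supT dom, supJ dom) ∉ dom ∧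
  (Ij dom (supJ dom)).Nonempty ∧ sSup (Ij dom (supJ dom)) ∉ Ij dom (supJ dom) ∧
  NoFlowExtensionW Wc Cw Fw dom φ

/-- Condition (⋆), for the set `Ktil ⊆ ℝⁿ × W_c`, relative to the set `K`. -/
def StarCond {n dc dd : ℕ} (Wc : Set (E dc)) (Wd : Set (E dd))
    (Cw : Set (E n × E dc)) (Fw : E n × E dc → Set (E n))
    (Dw : Set (E n × E dd)) (Gw : E n × E dd → Set (E n))
    (Ktil : Set (E n × E dc)) (K : Set (E n)) : Prop :=
  ¬ ∃ dom φ wc wd, IsMaximalSolutionPair Wc Wd Cw Fw Dw Gw dom φ wc wd ∧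
    φ 0 0 ∈ proj Wc Ktil ∧ RangeIn dom φ K ∧ EndsWithUnextendableFlowW Wc Cw Fw dom φ


/-- Derivative estimate for the distance to a closed set along a curve (key step in the
proof of Theorem 4.10). -/
theorem deriv_infDist_le {n : ℕ} (S : Set (E n)) (hS : S.Nonempty) (hScl : IsClosed S)
    (I : Set ℝ) (hI : I.OrdConnected) (z : ℝ → E n) (t₀ : ℝ) (ht₀ : t₀ ∈ I)
    (v : E n) (hz : HasDerivAt z v t₀)
    (d : ℝ) (hd : HasDerivAt (fun t => Metric.infDist (z t) S) d t₀)
    (χ : E n) (hχ : χ ∈ S) (hclosest : ‖z t₀ - χ‖ = Metric.infDist (z t₀) S) :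
    (∀ ω ∈ tangentCone S χ, d ≤ ‖v - ω‖) ∧
      d ≤ Metric.infDist v (tangentCone S χ) := by
  set g : ℝ → ℝ := fun t => Metric.infDist (z t) S with hg
  -- the map τ ↦ t₀ + τ from 𝓝[>]0 into 𝓝[≠]t₀
  have hcomp : Tendsto (fun τ : ℝ => t₀ + τ) (𝓝[>] (0:ℝ)) (𝓝[≠] t₀) := by
    apply tendsto_nhdsWithin_of_tendsto_nhds_of_eventually_within
    · have : Tendsto (fun τ : ℝ => t₀ + τ) (𝓝 (0:ℝ)) (𝓝 (t₀ + 0)) :=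
        tendsto_const_nhds.add tendsto_id
      simpa using this.mono_left nhdsWithin_le_nhds
    · filter_upwards [self_mem_nhdsWithin] with τ (hτ : (0:ℝ) < τ)
      simp [hτ.ne']
  -- slope of g tends to d along 𝓝[>]0
  have hgd : Tendsto (fun τ : ℝ => (g (t₀ + τ) - g t₀) / τ) (𝓝[>] (0:ℝ)) (𝓝 d) := by
    have h1 := (hasDerivAt_iff_tendsto_slope.mp hd).comp hcomp
    have : (fun τ : ℝ => slope g t₀ (t₀ + τ)) = fun τ : ℝ => (g (t₀ + τ) - g t₀) / τ := by
      funext τ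
      simp [slope_def_field, add_sub_cancel_left]
    simpa [Function.comp_def, this] using h1
  -- slope of z tends to v along 𝓝[>]0
  have hzv : Tendsto (fun τ : ℝ => τ⁻¹ • (z (t₀ + τ) - z t₀)) (𝓝[>] (0:ℝ)) (𝓝 v) := by
    have h1 := (hasDerivAt_iff_tendsto_slope.mp hz).comp hcomp
    have : (fun τ : ℝ => slope z t₀ (t₀ + τ)) = fun τ : ℝ => τ⁻¹ • (z (t₀ + τ) - z t₀) := by
      funext τ
      simp [slope, add_sub_cancel_left, vsub_eq_sub]
    simpa [Function.comp_def, this] using h1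
  have key : ∀ ω ∈ tangentCone S χ, d ≤ ‖v - ω‖ := by
    intro ω hω
    have hA : Tendsto (fun τ : ℝ => ‖τ⁻¹ • (z (t₀ + τ) - z t₀) - ω‖) (𝓝[>] (0:ℝ))
        (𝓝 ‖v - ω‖) := (hzv.sub tendsto_const_nhds).norm
    -- pointwise inequality for τ > 0
    have hineq : ∀ᶠ τ in 𝓝[>] (0:ℝ),
        (g (t₀ + τ) - g t₀) / τ ≤
          ‖τ⁻¹ • (z (t₀ + τ) - z t₀) - ω‖ + Metric.infDist (χ + τ • ω) S / τ := by
      filter_upwards [self_mem_nhdsWithin] with τ (hτ : (0:ℝ) < τ)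
      have h1 : g (t₀ + τ) ≤ dist (z (t₀ + τ)) (χ + τ • ω) + Metric.infDist (χ + τ • ω) S :=
        (Metric.infDist_le_infDist_add_dist).trans_eq (by rw [add_comm, dist_comm])
      have h2 : dist (z (t₀ + τ)) (χ + τ • ω) ≤
          ‖z (t₀ + τ) - z t₀ - τ • ω‖ + ‖z t₀ - χ‖ := by
        rw [dist_eq_norm]
        have : z (t₀ + τ) - (χ + τ • ω) = (z (t₀ + τ) - z t₀ - τ • ω) + (z t₀ - χ) := by
          abel
        rw [this]
        exact norm_add_le _ _
      have hgt₀ : g t₀ = ‖z t₀ - χ‖ := hclosest.symm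
      have h3 : g (t₀ + τ) - g t₀ ≤
          ‖z (t₀ + τ) - z t₀ - τ • ω‖ + Metric.infDist (χ + τ • ω) S := by
        rw [hgt₀]; linarith
      have h4 : ‖z (t₀ + τ) - z t₀ - τ • ω‖ / τ = ‖τ⁻¹ • (z (t₀ + τ) - z t₀) - ω‖ := by
        rw [div_eq_inv_mul]
        have : τ⁻¹ • (z (t₀ + τ) - z t₀) - ω = τ⁻¹ • (z (t₀ + τ) - z t₀ - τ • ω) := by
          simp [smul_sub, smul_smul, inv_mul_cancel₀ hτ.ne']
        rw [this, norm_smul, Real.norm_eq_abs, abs_of_pos (inv_pos.mpr hτ)]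
      calc (g (t₀ + τ) - g t₀) / τ
          ≤ (‖z (t₀ + τ) - z t₀ - τ • ω‖ + Metric.infDist (χ + τ • ω) S) / τ :=
            by gcongr
        _ = ‖τ⁻¹ • (z (t₀ + τ) - z t₀) - ω‖ + Metric.infDist (χ + τ • ω) S / τ := by
            rw [add_div, h4]
    -- ε-argument
    refine le_of_forall_pos_le_add fun ε hε => ?_
    have hε3 : (0:ℝ) < ε / 3 := by linarith
    have hAe : ∀ᶠ τ in 𝓝[>] (0:ℝ),
        ‖τ⁻¹ • (z (t₀ + τ) - z t₀) - ω‖ < ‖v - ω‖ + ε / 3 :=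
      hA.eventually_lt_const (by linarith)
    have hDe : ∀ᶠ τ in 𝓝[>] (0:ℝ), d - ε / 3 < (g (t₀ + τ) - g t₀) / τ :=
      hgd.eventually_const_lt (by linarith)
    have hbdd : Filter.IsCoboundedUnder (· ≥ ·) (𝓝[>] (0:ℝ))
        (fun τ : ℝ => Metric.infDist (χ + τ • ω) S / τ) := by
      haveI : (𝓝[>] (0:ℝ)).NeBot := nhdsGT_neBot 0
      apply Filter.isCoboundedUnder_ge_of_eventually_le (x := ‖ω‖) (l := 𝓝[>] (0:ℝ))
      filter_upwards [self_mem_nhdsWithin] with τ (hτ : (0:ℝ) < τ)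
      have h1 : Metric.infDist (χ + τ • ω) S ≤ Metric.infDist χ S + dist (χ + τ • ω) χ :=
        Metric.infDist_le_infDist_add_dist
      have h2 : Metric.infDist χ S = 0 := Metric.infDist_zero_of_mem hχ
      have h3 : dist (χ + τ • ω) χ = τ * ‖ω‖ := by
        rw [dist_eq_norm, add_sub_cancel_left, norm_smul, Real.norm_eq_abs, abs_of_pos hτ]
      rw [div_le_iff₀ hτ]
      calc Metric.infDist (χ + τ • ω) S ≤ 0 + τ * ‖ω‖ := by rw [← h2, ← h3]; exact h1
        _ = ‖ω‖ * τ := by ring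
    have hBf : ∃ᶠ τ in 𝓝[>] (0:ℝ), Metric.infDist (χ + τ • ω) S / τ < ε / 3 := by
      apply Filter.frequently_lt_of_liminf_lt hbdd
      rw [hω]
      exact hε3
    obtain ⟨τ, hB, hA', hD', hle⟩ := (hBf.and_eventually (hAe.and (hDe.and hineq))).exists
    linarith
  refine ⟨key, ?_⟩
  have h0mem : (0 : E n) ∈ tangentCone S χ := by
    have : (fun τ : ℝ => Metric.infDist (χ + τ • (0 : E n)) S / τ) = fun _ => (0:ℝ) := by
      funext τ
      simp [Metric.infDist_zero_of_mem hχ]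
    simp only [tangentCone, Set.mem_setOf_eq, this]
    exact Filter.liminf_const 0
  by_contra hcon
  push_neg at hcon
  obtain ⟨ω, hω, hlt⟩ := (Metric.infDist_lt_iff ⟨0, h0mem⟩).mp hcon
  rw [dist_eq_norm] at hlt
  exact absurd (key ω hω) (not_le.mpr hlt)

end Hybrid
end
end

section
/- Flow invariance of a closed set under a locally Lipschitz differential inclusion with subtangential values (continuous-time core of the proof of Theorem 4.2): Let C ⊆ ℝⁿ be closed, let K ⊆ ℝⁿ be such that S := K ∩ C is nonempty and closed, and let F : ℝⁿ ⇉ ℝⁿ be locally Lipschitz on C and satisfy F(x) ⊆ T_S(x) for every x ∈ ∂S. If z : [a,b] → ℝⁿ is absolutely continuous with z(t) ∈ C for all t ∈ [a,b], z'(t) ∈ F(z(t)) for almost every t ∈ [a,b], and z(a) ∈ S, then z(t) ∈ S for every t ∈ [a,b]. -/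
open Set Filter MeasureTheory Metric Topology

noncomputable section

namespace Hybrid

/-! Let `g t = dist (z t, S)`. Near a time `u` with `z u ∈ S`, the points of `S` nearest to `z t`
stay in a neighbourhood of `z u` where `F` is `λ`-Lipschitz, so `z' t ∈ F (z t)` lies within
`λ g t` of some `w ∈ F ξ ⊆ T_S(ξ)`, `ξ` a nearest point; moving from `ξ` along `w` keeps the
distance to `S` of order `o(τ)`, whence `g' t ≤ λ g t` wherever `g` is differentiable. As `g` is
absolutely continuous, Grönwall's inequality forces `g = 0` to the right of `u`, and continuous
induction on `[a, b]` concludes. -/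

theorem AbsolutelyContinuousOn.absolutelyContinuousOnInterval {X : Type*}
    [NormedAddCommGroup X] {f : ℝ → X} {a b : ℝ} (hf : AbsolutelyContinuousOn f (uIcc a b)) :
    AbsolutelyContinuousOnInterval f a b := by
  rw [absolutelyContinuousOnInterval_iff]
  intro ε hε
  obtain ⟨δ, hδ, hfδ⟩ := hf ε hε
  refine ⟨δ, hδ, fun ⟨m, I⟩ ⟨hmem, hdisj⟩ hlen => ?_⟩
  have hI : ∀ i < m, dist (I i).1 (I i).2 = max (I i).1 (I i).2 - min (I i).1 (I i).2 :=
    fun i _ => by rw [Real.dist_eq, max_sub_min_eq_abs']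
  have key := hfδ m (fun i => min (I i).1 (I i).2) (fun i => max (I i).1 (I i).2)
    (fun i hi => ?_) (fun i hi j hj hij => ?_) ?_
  · refine lt_of_eq_of_lt (Finset.sum_congr rfl fun i _ => ?_) key
    rcases le_total (I i).1 (I i).2 with h | h
    · simp [h, dist_eq_norm']
    · simp [h, dist_eq_norm]
  · obtain ⟨h1, h2⟩ := hmem i (Finset.mem_range.mpr hi)
    exact ⟨min_rec' _ h1 h2, max_rec' _ h1 h2, min_le_max⟩
  · exact (hdisj (Finset.mem_range.mpr hi) (Finset.mem_range.mpr hj) hij).mono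
      Ioo_subset_Ioc_self Ioo_subset_Ioc_self
  · simpa [Finset.sum_congr rfl fun i hi => hI i (Finset.mem_range.mp hi)] using hlen

theorem _root_.LipschitzWith.comp_absolutelyContinuousOnInterval {X Y : Type*}
    [PseudoMetricSpace X] [PseudoMetricSpace Y] {φ : X → Y} {K : NNReal} {f : ℝ → X}
    {a b : ℝ} (hφ : LipschitzWith K φ) (hf : AbsolutelyContinuousOnInterval f a b) :
    AbsolutelyContinuousOnInterval (φ ∘ f) a b := by
  have hK := Filter.Tendsto.const_mul (K : ℝ) hf
  rw [mul_zero] at hK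
  refine squeeze_zero (fun _ => Finset.sum_nonneg fun _ _ => dist_nonneg) (fun E => ?_) hK
  rw [Finset.mul_sum]
  exact Finset.sum_le_sum fun i _ => hφ.dist_le_mul _ _

theorem _root_.AbsolutelyContinuousOnInterval.le_mul_exp_of_hasDerivAt_le {f : ℝ → ℝ}
    {a b K : ℝ} (hab : a ≤ b) (hf : AbsolutelyContinuousOnInterval f a b)
    (hf' : ∀ᵐ t, t ∈ Ioo a b → ∀ d, HasDerivAt f d t → d ≤ K * f t) :
    f b ≤ f a * Real.exp (K * (b - a)) := by
  set e : ℝ → ℝ := fun t => Real.exp (-K * (t - a))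
  have he : ∀ t, HasDerivAt e (e t * -K) t := fun t =>
    (((hasDerivAt_id t).sub_const a).const_mul (-K)).exp.congr_deriv (by simp [e])
  have he_ac : AbsolutelyContinuousOnInterval e a b :=
    ContDiffOn.absolutelyContinuousOnInterval (by fun_prop)
  have hderiv : ∀ᵐ t, t ∈ Ioo a b → deriv (e * f) t ≤ 0 := by
    filter_upwards [hf', hf.ae_differentiableAt] with t hbound hdiff ht
    have hft := (hdiff (Ioo_subset_Icc_self.trans Icc_subset_uIcc ht)).hasDerivAt
    rw [((he t).mul hft).deriv]
    have hft_le := hbound ht _ hft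
    have he_pos := Real.exp_pos (-K * (t - a))
    nlinarith
  have hint : ∫ t in a..b, deriv (e * f) t ≤ 0 := by
    rw [← neg_nonneg, ← intervalIntegral.integral_neg]
    refine intervalIntegral.integral_nonneg_of_ae_restrict hab ?_
    rw [← Measure.restrict_congr_set Ioo_ae_eq_Icc, EventuallyLE,
      ae_restrict_iff' measurableSet_Ioo]
    filter_upwards [hderiv] with t ht hmem
    simpa using ht hmem
  rw [(he_ac.mul hf).integral_deriv_eq_sub] at hint
  simp only [Pi.mul_apply, e, sub_self, mul_zero, Real.exp_zero, one_mul, sub_nonpos] at hint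
  calc f b = Real.exp (-K * (b - a)) * f b * Real.exp (K * (b - a)) := by
        rw [mul_right_comm, ← Real.exp_add]; simp
    _ ≤ f a * Real.exp (K * (b - a)) := by gcongr

theorem _root_.mem_frontier_of_infDist_eq_dist {X : Type*} [NormedAddCommGroup X]
    [NormedSpace ℝ X] {S : Set X} {x ξ : X} (hξ : ξ ∈ S) (hx : x ∉ S)
    (h : infDist x S = dist x ξ) : ξ ∈ frontier S := by
  have hne : dist x ξ ≠ 0 := dist_ne_zero.mpr fun hxξ => hx (hxξ ▸ hξ)
  rw [frontier_eq_closure_inter_closure]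
  refine ⟨subset_closure hξ, closure_mono (ball_infDist_subset_compl (x := x)) ?_⟩
  rw [h, closure_ball x hne, mem_closedBall, dist_comm]

theorem frequently_infDist_lt_of_mem_tangentCone {n : ℕ} {S : Set (E n)} {ξ w : E n}
    (hξ : ξ ∈ S) (hw : w ∈ tangentCone S ξ) {ε : ℝ} (hε : 0 < ε) :
    ∃ᶠ τ in 𝓝[>] (0 : ℝ), infDist (ξ + τ • w) S < ε * τ := by
  have hbdd : IsBoundedUnder (· ≤ ·) (𝓝[>] (0 : ℝ))
      fun τ : ℝ => infDist (ξ + τ • w) S / τ := by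
    refine ⟨‖w‖, eventually_map.mpr ?_⟩
    filter_upwards [self_mem_nhdsWithin] with τ (hτ : 0 < τ)
    rw [div_le_iff₀ hτ]
    calc infDist (ξ + τ • w) S ≤ dist (ξ + τ • w) ξ := infDist_le_dist_of_mem hξ
      _ = ‖w‖ * τ := by rw [dist_eq_norm, add_sub_cancel_left, norm_smul,
          Real.norm_of_nonneg hτ.le, mul_comm]
  have hlim : liminf (fun τ : ℝ => infDist (ξ + τ • w) S / τ) (𝓝[>] 0) < ε := by
    rwa [show liminf _ _ = (0 : ℝ) from hw]
  refine (frequently_lt_of_liminf_lt hbdd.isCoboundedUnder_ge hlim).mp ?_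
  filter_upwards [self_mem_nhdsWithin] with τ (hτ : 0 < τ)
  rw [div_lt_iff₀ hτ]
  exact id

theorem le_norm_sub_of_hasDerivAt_infDist {n : ℕ} {S : Set (E n)} {f : ℝ → E n} {t d : ℝ}
    {v w ξ : E n} (hf : HasDerivAt f v t) (hd : HasDerivAt (fun s => infDist (f s) S) d t)
    (hξ : ξ ∈ S) (hξt : infDist (f t) S = dist (f t) ξ) (hw : w ∈ tangentCone S ξ) :
    d ≤ ‖v - w‖ := by
  refine le_of_forall_pos_lt_add fun ε hε => ?_
  have hε3 : 0 < ε / 3 := by positivity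
  have hf_slope : ∀ᶠ τ in 𝓝[>] (0 : ℝ), dist (τ⁻¹ • (f (t + τ) - f t)) v < ε / 3 :=
    Metric.tendsto_nhds.mp hf.tendsto_slope_zero_right _ hε3
  have hd_slope : ∀ᶠ τ in 𝓝[>] (0 : ℝ),
      d - ε / 3 < τ⁻¹ • (infDist (f (t + τ)) S - infDist (f t) S) :=
    hd.tendsto_slope_zero_right.eventually (lt_mem_nhds (by linarith))
  obtain ⟨τ, hτw, ⟨hτf, hτd⟩, hτ : 0 < τ⟩ := ((frequently_infDist_lt_of_mem_tangentCone hξ hw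
    hε3).and_eventually ((hf_slope.and hd_slope).and self_mem_nhdsWithin)).exists
  have hsplit : f (t + τ) - (ξ + τ • w)
      = (f t - ξ) + τ • (τ⁻¹ • (f (t + τ) - f t) - v) + τ • (v - w) := by
    rw [smul_sub, smul_inv_smul₀ hτ.ne', smul_sub]; abel
  have hnorm : dist (f (t + τ)) (ξ + τ • w) ≤ infDist (f t) S + τ * (ε / 3) + τ * ‖v - w‖ := by
    rw [dist_eq_norm, hsplit, hξt, dist_eq_norm]
    refine (norm_add₃_le ..).trans ?_
    rw [norm_smul, norm_smul, Real.norm_of_nonneg hτ.le, ← dist_eq_norm _ v]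
    gcongr
  have hstep := infDist_le_infDist_add_dist (x := f (t + τ)) (y := ξ + τ • w) (s := S)
  rw [smul_eq_mul, lt_inv_mul_iff₀ hτ] at hτd
  nlinarith

theorem le_mul_infDist_of_hasDerivAt_infDist {n : ℕ} {S : Set (E n)} {F : E n → Set (E n)}
    {lam : ℝ} (hS : IsClosed S) (hne : S.Nonempty)
    (hTan : ∀ x ∈ frontier S, F x ⊆ tangentCone S x) {f : ℝ → E n} {t d : ℝ} {v : E n}
    (hf : HasDerivAt f v t)
    (hLip : ∀ ξ ∈ S, infDist (f t) S = dist (f t) ξ → ∃ w ∈ F ξ, ‖v - w‖ ≤ lam * ‖f t - ξ‖)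
    (hd : HasDerivAt (fun s => infDist (f s) S) d t) :
    d ≤ lam * infDist (f t) S := by
  by_cases hft : f t ∈ S
  · have hmin : IsLocalMin (fun s => infDist (f s) S) t := Eventually.of_forall fun s => by
      simp only [infDist_zero_of_mem hft]; exact infDist_nonneg
    rw [hmin.hasDerivAt_eq_zero hd, infDist_zero_of_mem hft, mul_zero]
  · obtain ⟨ξ, hξ, hξt⟩ := hS.exists_infDist_eq_dist hne (f t)
    obtain ⟨w, hw, hvw⟩ := hLip ξ hξ hξt
    calc d ≤ ‖v - w‖ := le_norm_sub_of_hasDerivAt_infDist hf hd hξ hξt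
          (hTan ξ (mem_frontier_of_infDist_eq_dist hξ hft hξt) hw)
      _ ≤ lam * infDist (f t) S := by rwa [hξt, dist_eq_norm]

theorem eventually_mem_of_subtangential {n : ℕ} {C S : Set (E n)} {F : E n → Set (E n)}
    (hS : IsClosed S) (hSC : S ⊆ C) (hLip : SetValuedLocallyLipschitzOn F C)
    (hTan : ∀ x ∈ frontier S, F x ⊆ tangentCone S x) {z : ℝ → E n} {a b u : ℝ}
    (hz : AbsolutelyContinuousOnInterval z a b) (hzC : ∀ t ∈ Icc a b, z t ∈ C)
    (hz' : ∀ᵐ t, t ∈ Ioo a b → ∃ v ∈ F (z t), HasDerivAt z v t)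
    (hu : u ∈ Ico a b) (hzu : z u ∈ S) : ∀ᶠ t in 𝓝[>] u, z t ∈ S := by
  obtain ⟨U, hU, lam, -, hLipU⟩ := hLip (z u) (hSC hzu)
  obtain ⟨r, hr, hball⟩ := Metric.mem_nhds_iff.mp hU
  have hnear : ∀ᶠ t in 𝓝[≥] u, t ∈ Icc a b ∧ z t ∈ ball (z u) (r / 2) := by
    have hcont : ContinuousWithinAt z (Icc a b) u :=
      (uIcc_of_le (hu.1.trans hu.2.le) ▸ hz.continuousOn) u (Ico_subset_Icc_self hu)
    exact (nhdsWithin_le_of_mem (Icc_mem_nhdsGE_of_mem hu))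
      (eventually_mem_nhdsWithin.and (hcont.eventually (ball_mem_nhds _ (half_pos hr))))
  obtain ⟨c, huc, hc⟩ := mem_nhdsGE_iff_exists_Icc_subset.mp hnear
  have hcab : c ∈ Icc a b := (hc (right_mem_Icc.mpr huc.le)).1
  have hg : AbsolutelyContinuousOnInterval (fun t => infDist (z t) S) u c :=
    (lipschitz_infDist_pt S).comp_absolutelyContinuousOnInterval <| hz.mono <|
      uIcc_subset_uIcc (Icc_subset_uIcc (Ico_subset_Icc_self hu)) (Icc_subset_uIcc hcab)
  have hg' : ∀ᵐ t, t ∈ Ioo u c →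
      ∀ d, HasDerivAt (fun s => infDist (z s) S) d t → d ≤ lam * infDist (z t) S := by
    filter_upwards [hz'] with t ht htuc d hd
    obtain ⟨htab, hzt⟩ := hc (Ioo_subset_Icc_self htuc)
    obtain ⟨v, hv, hzv⟩ := ht ⟨hu.1.trans_lt htuc.1, htuc.2.trans_le hcab.2⟩
    refine le_mul_infDist_of_hasDerivAt_infDist hS ⟨_, hzu⟩ hTan hzv (fun ξ hξ hξt => ?_) hd
    refine hLipU _ ⟨hball (ball_subset_ball (half_le_self hr.le) hzt), hzC t htab⟩ ξ
      ⟨hball ?_, hSC hξ⟩ v hv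
    rw [mem_ball] at hzt ⊢
    calc dist ξ (z u) ≤ dist (z t) ξ + dist (z t) (z u) := dist_triangle_left _ _ _
      _ ≤ 2 * dist (z t) (z u) := by rw [← hξt]; linarith [infDist_le_dist_of_mem (x := z t) hzu]
      _ < r := by linarith
  filter_upwards [Ioc_mem_nhdsGT huc] with t ht
  have hgt := (hg.mono (uIcc_subset_uIcc left_mem_uIcc (Icc_subset_uIcc (Ioc_subset_Icc_self ht))))
    |>.le_mul_exp_of_hasDerivAt_le ht.1.le
      (by filter_upwards [hg'] with s hs hsut using hs ⟨hsut.1, hsut.2.trans_le ht.2⟩)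
  rw [infDist_zero_of_mem hzu, zero_mul] at hgt
  exact (hS.mem_iff_infDist_zero ⟨_, hzu⟩).mpr (le_antisymm hgt infDist_nonneg)

theorem flow_invariance_subtangential_general {n : ℕ} (C K : Set (E n))
    (hScl : IsClosed (K ∩ C))
    (F : E n → Set (E n))
    (hLip : SetValuedLocallyLipschitzOn F C)
    (hTan : ∀ x ∈ frontier (K ∩ C), F x ⊆ tangentCone (K ∩ C) x)
    (a b : ℝ) (z : ℝ → E n)
    (hz : AbsolutelyContinuousOn z (Set.Icc a b))
    (hzC : ∀ t ∈ Set.Icc a b, z t ∈ C)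
    (hz' : ∀ᵐ t ∂(volume.restrict (Set.Icc a b)),
      ∃ v ∈ F (z t), HasDerivWithinAt z v (Set.Icc a b) t)
    (hza : z a ∈ K ∩ C) :
    ∀ t ∈ Set.Icc a b, z t ∈ K ∩ C := by
  intro t ht
  have hab : a ≤ b := ht.1.trans ht.2
  have hzAC : AbsolutelyContinuousOnInterval z a b :=
    AbsolutelyContinuousOn.absolutelyContinuousOnInterval (by rwa [uIcc_of_le hab])
  have hzderiv : ∀ᵐ s, s ∈ Ioo a b → ∃ v ∈ F (z s), HasDerivAt z v s := by
    rw [ae_restrict_iff' measurableSet_Icc] at hz'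
    filter_upwards [hz'] with s hs hsab
    obtain ⟨v, hv, hzv⟩ := hs (Ioo_subset_Icc_self hsab)
    exact ⟨v, hv, hzv.hasDerivAt (Icc_mem_nhds hsab.1 hsab.2)⟩
  have hclosed : IsClosed ({s | z s ∈ K ∩ C} ∩ Icc a b) := by
    rw [inter_comm]
    exact (uIcc_of_le hab ▸ hzAC.continuousOn).preimage_isClosed_of_isClosed isClosed_Icc hScl
  refine hclosed.Icc_subset_of_forall_mem_nhdsWithin hza (fun s ⟨hs, hsab⟩ => ?_) ht
  exact eventually_mem_of_subtangential hScl inter_subset_right hLip hTan hzAC hzC hzderiv hsab hs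

/-- Flow invariance of a closed set under a locally Lipschitz differential inclusion with
subtangential values (continuous-time core of the proof of Theorem 4.2). -/
theorem flow_invariance_subtangential {n : ℕ} (C K : Set (E n))
    (hC : IsClosed C)
    (hSne : (K ∩ C).Nonempty) (hScl : IsClosed (K ∩ C))
    (F : E n → Set (E n))
    (hLip : SetValuedLocallyLipschitzOn F C)
    (hTan : ∀ x ∈ frontier (K ∩ C), F x ⊆ tangentCone (K ∩ C) x)
    (a b : ℝ) (z : ℝ → E n)
    (hz : AbsolutelyContinuousOn z (Set.Icc a b))
    (hzC : ∀ t ∈ Set.Icc a b, z t ∈ C)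
    (hz' : ∀ᵐ t ∂(volume.restrict (Set.Icc a b)),
      ∃ v ∈ F (z t), HasDerivWithinAt z v (Set.Icc a b) t)
    (hza : z a ∈ K ∩ C) :
    ∀ t ∈ Set.Icc a b, z t ∈ K ∩ C :=
  flow_invariance_subtangential_general C K hScl F hLip hTan a b z hz hzC hz' hza

end Hybrid
end
end
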